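/- arXiv:1905.05427 — 2 statements merged into one kernel-verified Lean document; each statement's English description precedes it below -/
import Mathlib

section
/- Define t : (0,∞) → (0,∞) by t(s) = 2·arsinh(1/(2·sinh(s/2))), and define H(s) = (s·tanh(s/2)) / (t(s)·tanh(t(s)/2)). Then H is strictly monotone increasing on (0,∞) and its range is all of (0,∞). In particular, for every M ∈ (0,∞) there is a unique s > 0 with H(s) = M. -/
noncomputable def tFun (s : ℝ) : ℝ := 2 * Real.arsinh (1 / (2 * Real.sinh (s / 2)))

noncomputable def HFun (s : ℝ) : ℝ :=
  (s * Real.tanh (s / 2)) / (tFun s * Real.tanh (tFun s / 2))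

/-!
Write `H = f / (f ∘ t)` with `f s = s · tanh (s / 2)`. On `(0, ∞)` the function `f` is positive
and increasing while `t` is decreasing, so `H` is increasing. Since `t` is an involution,
`H (t s) = (H s)⁻¹`; as `H s ≥ c · s` for `s ≥ 1`, `H` is unbounded above, hence by this
symmetry takes arbitrarily small positive values, and continuity fills in `(0, ∞)`.
-/

open Real Set Filter

namespace Real

theorem strictMono_tanh : StrictMono tanh := fun a b hab =>
  lt_of_not_ge fun h => hab.not_ge <| by
    simpa only [artanh_tanh] using artanh_le_artanh (neg_one_lt_tanh b) (tanh_lt_one a) h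

theorem tanh_pos {x : ℝ} (hx : 0 < x) : 0 < tanh x := by
  simpa only [tanh_zero] using strictMono_tanh hx

theorem continuous_tanh : Continuous tanh := by
  simp_rw [funext tanh_eq_sinh_div_cosh]
  exact continuous_sinh.div continuous_cosh fun x => (cosh_pos x).ne'

end Real

noncomputable def mulTanhHalf (s : ℝ) : ℝ := s * tanh (s / 2)

theorem mulTanhHalf_pos {s : ℝ} (hs : 0 < s) : 0 < mulTanhHalf s :=
  mul_pos hs (tanh_pos (half_pos hs))

theorem strictMonoOn_mulTanhHalf : StrictMonoOn mulTanhHalf (Ioi 0) := fun a ha _ _ hab =>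
  mul_lt_mul'' hab (strictMono_tanh (by linarith)) (le_of_lt ha) (tanh_pos (half_pos ha)).le

theorem continuous_mulTanhHalf : Continuous mulTanhHalf :=
  continuous_id.mul (continuous_tanh.comp (continuous_id.div_const 2))

theorem tFun_pos {s : ℝ} (hs : 0 < s) : 0 < tFun s := by
  have : 0 < sinh (s / 2) := sinh_pos_iff.2 (half_pos hs)
  exact mul_pos two_pos (arsinh_pos_iff.2 (by positivity))

theorem strictAntiOn_tFun : StrictAntiOn tFun (Ioi 0) := fun a ha b _ hab => by
  have hsinh : sinh (a / 2) < sinh (b / 2) := sinh_lt_sinh.2 (by linarith)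
  have ha' : 0 < sinh (a / 2) := sinh_pos_iff.2 (half_pos ha)
  exact mul_lt_mul_of_pos_left (arsinh_lt_arsinh.2 (by gcongr)) two_pos

theorem continuousOn_tFun : ContinuousOn tFun (Ioi 0) := by
  refine continuousOn_const.mul (ContinuousOn.arsinh (continuousOn_const.div (by fun_prop) ?_))
  intro x hx
  exact mul_ne_zero two_ne_zero (sinh_pos_iff.2 (half_pos hx)).ne'

theorem tFun_tFun {s : ℝ} (hs : 0 < s) : tFun (tFun s) = s := by
  have : sinh (s / 2) ≠ 0 := (sinh_pos_iff.2 (half_pos hs)).ne'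
  have hsinh : sinh (tFun s / 2) = 1 / (2 * sinh (s / 2)) := by
    rw [tFun, mul_div_cancel_left₀ _ two_ne_zero, sinh_arsinh]
  have hrecip : 1 / (2 * (1 / (2 * sinh (s / 2)))) = sinh (s / 2) := by field_simp
  rw [tFun, hsinh, hrecip, arsinh_sinh]
  ring

theorem HFun_eq_div (s : ℝ) : HFun s = mulTanhHalf s / mulTanhHalf (tFun s) := rfl

theorem HFun_pos {s : ℝ} (hs : 0 < s) : 0 < HFun s :=
  div_pos (mulTanhHalf_pos hs) (mulTanhHalf_pos (tFun_pos hs))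

theorem HFun_tFun {s : ℝ} (hs : 0 < s) : HFun (tFun s) = (HFun s)⁻¹ := by
  rw [HFun_eq_div, HFun_eq_div, tFun_tFun hs, inv_div]

theorem strictMonoOn_HFun : StrictMonoOn HFun (Ioi 0) := fun _ ha _ hb hab =>
  div_lt_div₀ (strictMonoOn_mulTanhHalf ha hb hab)
    (strictMonoOn_mulTanhHalf.monotoneOn (tFun_pos hb) (tFun_pos ha)
      (strictAntiOn_tFun ha hb hab).le)
    (mulTanhHalf_pos hb).le (mulTanhHalf_pos (tFun_pos hb))

theorem continuousOn_HFun : ContinuousOn HFun (Ioi 0) :=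
  continuous_mulTanhHalf.continuousOn.div
    (continuous_mulTanhHalf.comp_continuousOn continuousOn_tFun)
    fun _ hs => (mulTanhHalf_pos (tFun_pos hs)).ne'

theorem mul_le_HFun {s : ℝ} (hs : 1 ≤ s) :
    s * (tanh (1 / 2) / mulTanhHalf (tFun 1)) ≤ HFun s := by
  have hs0 : 0 < s := by linarith
  have hnum : s * tanh (1 / 2) ≤ mulTanhHalf s :=
    mul_le_mul_of_nonneg_left (strictMono_tanh.monotone (by linarith)) hs0.le
  have hden : mulTanhHalf (tFun s) ≤ mulTanhHalf (tFun 1) :=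
    strictMonoOn_mulTanhHalf.monotoneOn (tFun_pos hs0) (tFun_pos one_pos)
      (strictAntiOn_tFun.antitoneOn (mem_Ioi.2 one_pos) (mem_Ioi.2 hs0) hs)
  rw [← mul_div_assoc, HFun_eq_div]
  exact div_le_div₀ (mulTanhHalf_pos hs0).le hnum (mulTanhHalf_pos (tFun_pos hs0)) hden

theorem tendsto_HFun_atTop : Tendsto HFun atTop atTop := by
  have hc : 0 < tanh (1 / 2) / mulTanhHalf (tFun 1) :=
    div_pos (tanh_pos one_half_pos) (mulTanhHalf_pos (tFun_pos one_pos))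
  exact tendsto_atTop_mono' atTop ((eventually_ge_atTop 1).mono fun _ => mul_le_HFun)
    (tendsto_id.atTop_mul_const hc)

theorem exists_lt_HFun (K : ℝ) : ∃ s, 0 < s ∧ K < HFun s :=
  ((eventually_gt_atTop 0).and (tendsto_HFun_atTop.eventually_gt_atTop K)).exists

theorem exists_HFun_lt {ε : ℝ} (hε : 0 < ε) : ∃ s, 0 < s ∧ HFun s < ε := by
  obtain ⟨s, hs, hlt⟩ := exists_lt_HFun ε⁻¹
  refine ⟨tFun s, tFun_pos hs, ?_⟩
  rw [HFun_tFun hs]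
  simpa using inv_strictAnti₀ (inv_pos.2 hε) hlt

theorem image_HFun_Ioi : HFun '' Ioi 0 = Ioi 0 := by
  refine Subset.antisymm (image_subset_iff.2 fun _ => HFun_pos) fun M hM => ?_
  obtain ⟨a, ha, haM⟩ := exists_HFun_lt hM
  obtain ⟨b, hb, hMb⟩ := exists_lt_HFun M
  exact (isPreconnected_Ioi.image HFun continuousOn_HFun).Icc_subset
    (mem_image_of_mem _ ha) (mem_image_of_mem _ hb) ⟨haM.le, hMb.le⟩

theorem stmt_2 :
    StrictMonoOn HFun (Set.Ioi (0 : ℝ)) ∧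
    HFun '' Set.Ioi (0 : ℝ) = Set.Ioi (0 : ℝ) ∧
    ∀ M : ℝ, 0 < M → ∃! s : ℝ, 0 < s ∧ HFun s = M := by
  refine ⟨strictMonoOn_HFun, image_HFun_Ioi, fun M hM => ?_⟩
  obtain ⟨s, hs, rfl⟩ := image_HFun_Ioi.ge (mem_Ioi.2 hM)
  exact ⟨s, ⟨hs, rfl⟩, fun y ⟨hy, hys⟩ => strictMonoOn_HFun.injOn hy hs hys⟩
end

section
/- Let m_c, m_d > 0. The function F(s, t) = m_d·s² + m_c·t² restricted to the constraint set {(s,t) ∈ (0,∞)² : sinh(s/2)·sinh(t/2) = 1/2} attains a minimum, and the minimizer is unique. -/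
open Real Set Filter

/-!
Write `w = log (sinh (s / 2))`. On the constraint set `sinh (t / 2) = exp (-w) / 2`, so the
energy becomes `4 m_d arsinh (exp w) ^ 2 + 4 m_c arsinh (exp (-w) / 2) ^ 2`. With
`ψ = arsinh (c exp w)` one has `ψ' = tanh ψ`, so `(ψ ^ 2)' = 2 ψ tanh ψ` is a product of
positive increasing functions: both terms are strictly convex in `w`, and each tends to infinity
at one end of the line. A strictly convex coercive function of `w` has exactly one minimizer.
-/

lemma Real.tanh_strictMono : StrictMono tanh := fun x y hxy => by
  have mem : ∀ z, tanh z ∈ Ioo (-1) 1 := fun z => ⟨neg_one_lt_tanh z, tanh_lt_one z⟩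
  rwa [← artanh_lt_artanh_iff (mem x) (mem y), artanh_tanh, artanh_tanh]

lemma Real.tanh_pos_s3 {x : ℝ} (hx : 0 < x) : 0 < tanh x := by
  simpa using tanh_strictMono hx

lemma StrictConvexOn.comp_neg {E : Type*} [AddCommGroup E] [Module ℝ E] {f : E → ℝ}
    (hf : StrictConvexOn ℝ univ f) : StrictConvexOn ℝ univ (fun x => f (-x)) := by
  refine ⟨convex_univ, fun x _ y _ hxy a b ha hb hab => ?_⟩
  have h := hf.2 (mem_univ (-x)) (mem_univ (-y)) (neg_injective.ne hxy) ha hb hab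
  rwa [smul_neg, smul_neg, ← neg_add] at h

lemma hasDerivAt_arsinh_mul_exp (c w : ℝ) :
    HasDerivAt (fun w => arsinh (c * exp w)) (tanh (arsinh (c * exp w))) w := by
  have := (hasDerivAt_arsinh _).comp w ((hasDerivAt_exp w).const_mul c)
  rw [tanh_arsinh]
  exact this.congr_deriv (by field_simp)

lemma strictConvexOn_mul_arsinh_mul_exp_sq {k c : ℝ} (hk : 0 < k) (hc : 0 < c) :
    StrictConvexOn ℝ univ (fun w => k * arsinh (c * exp w) ^ 2) := by
  set ψ : ℝ → ℝ := fun w => arsinh (c * exp w)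
  have hψ : StrictMono ψ := arsinh_strictMono.comp (exp_strictMono.const_mul hc)
  have hψ_pos : ∀ w, 0 < ψ w := fun w => arsinh_pos_iff.2 (by positivity)
  have hderiv : deriv (fun w => k * ψ w ^ 2) = fun w => 2 * k * (ψ w * tanh (ψ w)) := by
    funext w
    exact (((hasDerivAt_arsinh_mul_exp c w).pow 2).const_mul k).deriv.trans (by push_cast; ring)
  have hcont : Continuous (fun w => k * ψ w ^ 2) := by
    have : Continuous ψ := continuous_arsinh.comp (continuous_const.mul continuous_exp)
    fun_prop
  refine StrictMono.strictConvexOn_univ_of_deriv hcont ?_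
  rw [hderiv]
  have hmono : StrictMono (ψ * (tanh ∘ ψ)) :=
    hψ.mul (tanh_strictMono.comp hψ) (fun w => (hψ_pos w).le)
      fun w => (tanh_pos_s3 (hψ_pos w)).le
  exact hmono.const_mul (by positivity : (0 : ℝ) < 2 * k)

lemma tendsto_mul_arsinh_mul_exp_sq_atTop {k c : ℝ} (hk : 0 < k) (hc : 0 < c) :
    Tendsto (fun w => k * arsinh (c * exp w) ^ 2) atTop atTop :=
  ((tendsto_pow_atTop two_ne_zero).comp <| sinhOrderIso.symm.tendsto_atTop.comp <|
    tendsto_exp_atTop.const_mul_atTop hc).const_mul_atTop hk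

theorem StrictConvexOn.exists_unique_isMinOn_of_range_eq {α E : Type*} [NormedAddCommGroup E]
    [NormedSpace ℝ E] [FiniteDimensional ℝ E] {S : Set α} {F : α → ℝ} {P : E → α}
    (hPS : range P = S) (hconv : StrictConvexOn ℝ univ (F ∘ P))
    (hcoer : Tendsto (F ∘ P) (cocompact E) atTop) :
    ∃ p ∈ S, IsMinOn F S p ∧ ∀ p' ∈ S, IsMinOn F S p' → p' = p := by
  subst hPS
  have hcont : Continuous (F ∘ P) :=
    continuousOn_univ.1 (hconv.convexOn.continuousOn isOpen_univ)
  obtain ⟨w₀, hw₀⟩ := hcont.exists_forall_le hcoer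
  refine ⟨P w₀, mem_range_self w₀, forall_mem_range.2 hw₀, ?_⟩
  rintro _ ⟨w, rfl⟩ hw
  have hw_min : IsMinOn (F ∘ P) univ w := fun v _ => hw (mem_range_self v)
  rw [hconv.eq_of_isMinOn hw_min (isMinOn_univ_iff.2 hw₀) trivial trivial]

def rightHexagonSides : Set (ℝ × ℝ) :=
  {q | 0 < q.1 ∧ 0 < q.2 ∧ sinh (q.1 / 2) * sinh (q.2 / 2) = 1 / 2}

noncomputable def rightHexagonSidesOfLog (w : ℝ) : ℝ × ℝ :=
  (2 * arsinh (exp w), 2 * arsinh (2⁻¹ * exp (-w)))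

lemma range_rightHexagonSidesOfLog : range rightHexagonSidesOfLog = rightHexagonSides := by
  ext ⟨s, t⟩
  constructor
  · rintro ⟨w, hw⟩
    simp only [rightHexagonSidesOfLog, Prod.mk.injEq] at hw
    obtain ⟨rfl, rfl⟩ := hw
    refine ⟨mul_pos two_pos (arsinh_pos_iff.2 (by positivity)),
      mul_pos two_pos (arsinh_pos_iff.2 (by positivity)), ?_⟩
    rw [mul_div_cancel_left₀ _ two_ne_zero, mul_div_cancel_left₀ _ two_ne_zero, sinh_arsinh,
      sinh_arsinh, exp_neg]
    field_simp
  · rintro ⟨hs, ht, hst⟩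
    have hsinh : 0 < sinh (s / 2) := sinh_pos_iff.2 (by positivity)
    refine ⟨log (sinh (s / 2)), ?_⟩
    have ht' : sinh (t / 2) = 2⁻¹ * (sinh (s / 2))⁻¹ := by
      field_simp
      linarith
    simp only [rightHexagonSidesOfLog, exp_neg, exp_log hsinh, ← ht', arsinh_sinh]
    ext <;> ring

def hexagonEnergy (md mc : ℝ) (q : ℝ × ℝ) : ℝ := md * q.1 ^ 2 + mc * q.2 ^ 2

lemma hexagonEnergy_comp_rightHexagonSidesOfLog (md mc : ℝ) :
    hexagonEnergy md mc ∘ rightHexagonSidesOfLog =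
      fun w => 4 * md * arsinh (exp w) ^ 2 + 4 * mc * arsinh (2⁻¹ * exp (-w)) ^ 2 := by
  funext w
  simp only [Function.comp, hexagonEnergy, rightHexagonSidesOfLog]
  ring

lemma strictConvexOn_hexagonEnergy_comp_rightHexagonSidesOfLog {md mc : ℝ} (hmd : 0 < md)
    (hmc : 0 < mc) : StrictConvexOn ℝ univ (hexagonEnergy md mc ∘ rightHexagonSidesOfLog) := by
  rw [hexagonEnergy_comp_rightHexagonSidesOfLog]
  have hd := strictConvexOn_mul_arsinh_mul_exp_sq (by positivity : 0 < 4 * md) one_pos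
  simp only [one_mul] at hd
  exact hd.add
    (strictConvexOn_mul_arsinh_mul_exp_sq (by positivity) (by norm_num)).comp_neg

lemma tendsto_hexagonEnergy_comp_rightHexagonSidesOfLog_cocompact {md mc : ℝ} (hmd : 0 < md)
    (hmc : 0 < mc) :
    Tendsto (hexagonEnergy md mc ∘ rightHexagonSidesOfLog) (cocompact ℝ) atTop := by
  rw [hexagonEnergy_comp_rightHexagonSidesOfLog, cocompact_eq_atBot_atTop]
  refine tendsto_sup.2 ⟨?_, ?_⟩
  · exact Tendsto.nonneg_add_atTop (fun w => by positivity)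
      ((tendsto_mul_arsinh_mul_exp_sq_atTop (by positivity) (by norm_num)).comp
        tendsto_neg_atBot_atTop)
  · have hd := tendsto_mul_arsinh_mul_exp_sq_atTop (by positivity : 0 < 4 * md) one_pos
    simp only [one_mul] at hd
    exact hd.atTop_add_nonneg fun w => by positivity

theorem stmt_3 (mc md : ℝ) (hmc : 0 < mc) (hmd : 0 < md) :
    ∃ p : ℝ × ℝ,
      (0 < p.1 ∧ 0 < p.2 ∧ Real.sinh (p.1 / 2) * Real.sinh (p.2 / 2) = 1 / 2) ∧
      (∀ q : ℝ × ℝ,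
        (0 < q.1 ∧ 0 < q.2 ∧ Real.sinh (q.1 / 2) * Real.sinh (q.2 / 2) = 1 / 2) →
        md * p.1 ^ 2 + mc * p.2 ^ 2 ≤ md * q.1 ^ 2 + mc * q.2 ^ 2) ∧
      (∀ p' : ℝ × ℝ,
        (0 < p'.1 ∧ 0 < p'.2 ∧ Real.sinh (p'.1 / 2) * Real.sinh (p'.2 / 2) = 1 / 2) →
        (∀ q : ℝ × ℝ,
          (0 < q.1 ∧ 0 < q.2 ∧ Real.sinh (q.1 / 2) * Real.sinh (q.2 / 2) = 1 / 2) →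
          md * p'.1 ^ 2 + mc * p'.2 ^ 2 ≤ md * q.1 ^ 2 + mc * q.2 ^ 2) →
        p' = p) := by
  obtain ⟨p, hp, hmin, huniq⟩ := StrictConvexOn.exists_unique_isMinOn_of_range_eq
    range_rightHexagonSidesOfLog (strictConvexOn_hexagonEnergy_comp_rightHexagonSidesOfLog hmd hmc)
    (tendsto_hexagonEnergy_comp_rightHexagonSidesOfLog_cocompact hmd hmc)
  exact ⟨p, hp, fun q hq => isMinOn_iff.1 hmin q hq,
    fun p' hp' hp'_min => huniq p' hp' (isMinOn_iff.2 hp'_min)⟩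
end
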